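/- Define f(a,b,r) = ₂F₁(a,b;a+b+1;r)/₂F₁(a,b;a+b;r) for a, b > 0 and r ∈ (0,1). Then for each fixed a > 0 and r ∈ (0,1), lim_{b→0⁺} f(a,b,r) = 1 and lim_{b→∞} f(a,b,r) = 1. -/

import Mathlib

open Real Filter Set

noncomputable def poch (x : ℝ) (n : ℕ) : ℝ := (ascPochhammer ℝ n).eval x

noncomputable def hyp (a b c x : ℝ) : ℝ :=
  ∑' n : ℕ, poch a n * poch b n / (poch c n * n.factorial) * x ^ n

noncomputable def digamma (x : ℝ) : ℝ := deriv Real.Gamma x / Real.Gamma x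

open Topology
lemma poch_zero (x : ℝ) : poch x 0 = 1 := by simp [poch]
lemma poch_succ (x : ℝ) (n : ℕ) : poch x (n+1) = poch x n * (x + n) :=
  ascPochhammer_succ_eval n x
lemma poch_succ_left (x : ℝ) (n : ℕ) : poch x (n+1) = x * poch (x+1) n := by
  simp [poch, ascPochhammer_succ_left, Polynomial.eval_comp]
lemma poch_pos {x : ℝ} (hx : 0 < x) (n : ℕ) : 0 < poch x n :=
  ascPochhammer_pos n x hx
lemma poch_mono {x y : ℝ} (hx : 0 < x) (hxy : x ≤ y) (n : ℕ) : poch x n ≤ poch y n := by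
  induction n with
  | zero => simp [poch_zero]
  | succ n ih =>
    rw [poch_succ, poch_succ]
    have h1 := poch_pos hx n
    have h2 : (0:ℝ) ≤ (n:ℝ) := Nat.cast_nonneg n
    nlinarith
lemma poch_shift (c : ℝ) (n : ℕ) : poch (c+1) n * c = poch c n * (c + n) := by
  induction n with
  | zero => simp [poch_zero]
  | succ n ih =>
    rw [poch_succ, poch_succ]
    push_cast
    linear_combination (c + 1 + (n:ℝ)) * ih
lemma poch_le_fact {b : ℝ} (hb : 0 < b) (hb1 : b ≤ 1) :
    ∀ n : ℕ, 1 ≤ n → poch b n ≤ b * n.factorial := by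
  intro n hn
  induction n with
  | zero => omega
  | succ n ih =>
    rcases Nat.eq_zero_or_pos n with h0 | h0
    · subst h0; simp [poch_succ, poch_zero]
    · have := ih h0
      rw [poch_succ]
      have hp := poch_pos hb n
      have hf : (0:ℝ) < n.factorial := by positivity
      have : poch b n * (b + n) ≤ b * n.factorial * (n+1) := by
        have hbn : b + n ≤ 1 + n := by linarith
        nlinarith
      calc poch b n * (b + n) ≤ b * n.factorial * (n+1) := this
        _ = b * (n+1).factorial := by rw [Nat.factorial_succ]; push_cast; ring
lemma sum_u {a r : ℝ} (ha : 0 < a) (hr0 : 0 < r) (hr1 : r < 1) :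
    Summable (fun n : ℕ => poch a n / n.factorial * r ^ n) := by
  apply summable_of_ratio_test_tendsto_lt_one hr1
  · filter_upwards with n
    have := poch_pos ha n
    have hf : (0:ℝ) < n.factorial := by positivity
    positivity
  · have key : ∀ n : ℕ, ‖poch a (n+1) / (n+1).factorial * r ^ (n+1)‖ /
        ‖poch a n / n.factorial * r ^ n‖ = (1 + (a-1)/(n+1)) * r := by
      intro n
      have hp := poch_pos ha n
      have hf : (0:ℝ) < n.factorial := by positivity
      have h1 : (0:ℝ) < (n:ℝ)+1 := by positivity
      have hp' := poch_pos ha (n+1)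
      have hf' : (0:ℝ) < (n+1).factorial := by positivity
      rw [Real.norm_eq_abs, Real.norm_eq_abs, abs_of_pos (by positivity),
        abs_of_pos (by positivity)]
      rw [poch_succ, Nat.factorial_succ]
      push_cast
      field_simp
      ring
    simp only [key]
    have h0 : Tendsto (fun n : ℕ => (a-1)/((n:ℝ)+1)) atTop (𝓝 0) := by
      apply Tendsto.div_atTop tendsto_const_nhds
      exact tendsto_atTop_add_const_right _ _ tendsto_natCast_atTop_atTop
    have := ((h0.const_add 1).mul_const r)
    simpa using this
lemma sum_nu {a r : ℝ} (ha : 0 < a) (hr0 : 0 < r) (hr1 : r < 1) :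
    Summable (fun n : ℕ => (n:ℝ) * (poch a n / n.factorial * r ^ n)) := by
  rw [← summable_nat_add_iff 1]
  have heq : (fun n : ℕ => ((n+1:ℕ):ℝ) * (poch a (n+1) / (n+1).factorial * r ^ (n+1)))
      = fun n : ℕ => (a*r) * (poch (a+1) n / n.factorial * r ^ n) := by
    funext n
    rw [poch_succ_left, Nat.factorial_succ]
    have hf : (0:ℝ) < n.factorial := by positivity
    push_cast
    field_simp
    ring
  rw [heq]
  exact (sum_u (by linarith) hr0 hr1).mul_left _

lemma key_bounds (a r : ℝ) (ha : 0 < a) (hr0 : 0 < r) (hr1 : r < 1) {b : ℝ} (hb : 0 < b) :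
    hyp a b (a+b+1) r / hyp a b (a+b) r ≤ 1 ∧
    1 - (∑' n : ℕ, (n:ℝ) * (poch a n / n.factorial * r ^ n)) / b
      ≤ hyp a b (a+b+1) r / hyp a b (a+b) r ∧
    (b ≤ 1 → 1 - b / (1 - r) ≤ hyp a b (a+b+1) r / hyp a b (a+b) r) := by
  set u : ℕ → ℝ := fun n => poch a n / n.factorial * r ^ n with hu_def
  set T : ℕ → ℝ := fun n => poch a n * poch b n / (poch (a+b) n * n.factorial) * r ^ n with hT_def
  set N : ℕ → ℝ := fun n => poch a n * poch b n / (poch (a+b+1) n * n.factorial) * r ^ n with hN_def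
  have hu : Summable u := sum_u ha hr0 hr1
  have hnu : Summable (fun n : ℕ => (n:ℝ) * u n) := sum_nu ha hr0 hr1
  have hab : 0 < a + b := by linarith
  have hab1 : 0 < a + b + 1 := by linarith
  have hTpos : ∀ n, 0 < T n := by
    intro n
    have h1 := poch_pos ha n; have h2 := poch_pos hb n; have h3 := poch_pos hab n
    have hf : (0:ℝ) < n.factorial := by positivity
    simp only [hT_def]; positivity
  have hNpos : ∀ n, 0 < N n := by
    intro n
    have h1 := poch_pos ha n; have h2 := poch_pos hb n; have h3 := poch_pos hab1 n
    have hf : (0:ℝ) < n.factorial := by positivity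
    simp only [hN_def]; positivity
  have hTu : ∀ n, T n ≤ u n := by
    intro n
    have h1 := poch_pos ha n; have h2 := poch_pos hb n; have h3 := poch_pos hab n
    have hf : (0:ℝ) < n.factorial := by positivity
    have hm : poch b n ≤ poch (a+b) n := poch_mono hb (by linarith) n
    have hfr : poch a n * poch b n / (poch (a+b) n * n.factorial) ≤ poch a n / n.factorial := by
      rw [div_le_div_iff₀ (by positivity) hf]
      nlinarith [mul_le_mul_of_nonneg_right (mul_le_mul_of_nonneg_left hm h1.le) hf.le]
    simp only [hT_def, hu_def]
    exact mul_le_mul_of_nonneg_right hfr (by positivity)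
  have hNT : ∀ n, N n = T n * ((a+b)/(a+b+(n:ℝ))) := by
    intro n
    have hs := poch_shift (a+b) n
    have h3 := poch_pos hab n
    have h4 := poch_pos hab1 n
    have hn0 : (0:ℝ) < a+b+(n:ℝ) := by positivity
    have hf : (0:ℝ) < n.factorial := by positivity
    simp only [hN_def, hT_def]
    field_simp
    linear_combination (-(poch a n * poch b n)) * hs
  have hNle : ∀ n, N n ≤ T n := by
    intro n
    rw [hNT n]
    have hn0 : (0:ℝ) < a+b+(n:ℝ) := by positivity
    have : (a+b)/(a+b+(n:ℝ)) ≤ 1 := by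
      rw [div_le_one hn0]; linarith [Nat.cast_nonneg (α := ℝ) n]
    nlinarith [hTpos n]
  have hTsum : Summable T := Summable.of_nonneg_of_le (fun n => (hTpos n).le) hTu hu
  have hNsum : Summable N := Summable.of_nonneg_of_le (fun n => (hNpos n).le) hNle hTsum
  have hT0 : T 0 = 1 := by simp [hT_def, poch_zero]
  have hN0 : N 0 = 1 := by simp [hN_def, poch_zero]
  have hD1 : 1 ≤ ∑' n, T n := by
    have := Summable.le_tsum hTsum 0 (fun i _ => (hTpos i).le)
    rwa [hT0] at this
  have hD0 : (0:ℝ) < ∑' n, T n := lt_of_lt_of_le one_pos hD1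
  have hND : ∑' n, N n ≤ ∑' n, T n := Summable.tsum_le_tsum hNle hNsum hTsum
  have hsub : ∑' n, (T n - N n) = (∑' n, T n) - ∑' n, N n := Summable.tsum_sub hTsum hNsum
  have hDhyp : hyp a b (a+b) r = ∑' n, T n := rfl
  have hNhyp : hyp a b (a+b+1) r = ∑' n, N n := rfl
  -- bound 1 : T n - N n ≤ n * u n / b
  have hbound1 : ∀ n, T n - N n ≤ (n:ℝ) * u n / b := by
    intro n
    have hn0 : (0:ℝ) < a+b+(n:ℝ) := by positivity
    have h1 : T n - N n = T n * ((n:ℝ)/(a+b+(n:ℝ))) := by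
      rw [hNT n]; field_simp; ring
    rw [h1]
    have h2 : (n:ℝ)/(a+b+(n:ℝ)) ≤ (n:ℝ)/b :=
      div_le_div_of_nonneg_left (Nat.cast_nonneg n) hb (by linarith)
    calc T n * ((n:ℝ)/(a+b+(n:ℝ))) ≤ u n * ((n:ℝ)/b) := by
          apply mul_le_mul (hTu n) h2 (by positivity) ((hTpos n).le.trans (hTu n))
      _ = (n:ℝ) * u n / b := by ring
  have hS1 : (∑' n, T n) - (∑' n, N n) ≤ (∑' n : ℕ, (n:ℝ) * u n) / b := by
    rw [← hsub]
    calc ∑' n, (T n - N n) ≤ ∑' n : ℕ, ((n:ℝ) * u n) / b := by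
          apply Summable.tsum_le_tsum hbound1 (hTsum.sub hNsum) (hnu.div_const b)
      _ = (∑' n : ℕ, (n:ℝ) * u n) / b := by rw [tsum_div_const]
  have hC0 : 0 ≤ ∑' n : ℕ, (n:ℝ) * u n :=
    tsum_nonneg (fun n => mul_nonneg (Nat.cast_nonneg n) ((hTpos n).trans_le (hTu n)).le)
  -- bound 2 (b ≤ 1)
  have main : ∀ B : ℝ, 0 ≤ B → (∑' n, T n) - (∑' n, N n) ≤ B →
      1 - B ≤ hyp a b (a+b+1) r / hyp a b (a+b) r := by
    intro B hB hSB
    rw [hNhyp, hDhyp, le_div_iff₀ hD0]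
    nlinarith [mul_nonneg hB (sub_nonneg.mpr hD1)]
  refine ⟨?_, ?_, ?_⟩
  · rw [hNhyp, hDhyp, div_le_one hD0]; exact hND
  · exact main _ (by positivity) hS1
  · intro hb1
    apply main _ (by rw [le_div_iff₀ (by linarith)]; nlinarith) _
    have hbound2 : ∀ n, T n - N n ≤ b * r ^ n := by
      intro n
      rcases Nat.eq_zero_or_pos n with h0 | h0
      · subst h0
        rw [hT0, hN0]
        simp only [pow_zero, mul_one]
        linarith
      · have h1 := poch_pos ha n; have h2 := poch_pos hb n; have h3 := poch_pos hab n
        have hf : (0:ℝ) < n.factorial := by positivity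
        have hm1 : poch a n ≤ poch (a+b) n := poch_mono ha (by linarith) n
        have hm2 : poch b n ≤ b * n.factorial := poch_le_fact hb hb1 n h0
        have hfr : poch a n * poch b n / (poch (a+b) n * n.factorial) ≤ b := by
          rw [div_le_iff₀ (by positivity)]
          nlinarith
        have hT_le : T n ≤ b * r ^ n := by
          simp only [hT_def]
          exact mul_le_mul_of_nonneg_right hfr (by positivity)
        nlinarith [hNpos n]
    rw [← hsub]
    calc ∑' n, (T n - N n) ≤ ∑' n : ℕ, b * r ^ n := by
          apply Summable.tsum_le_tsum hbound2 (hTsum.sub hNsum)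
          exact (summable_geometric_of_lt_one hr0.le hr1).mul_left b
      _ = b * (1-r)⁻¹ := by
          rw [tsum_mul_left, tsum_geometric_of_lt_one hr0.le hr1]
      _ = b / (1-r) := by rw [div_eq_mul_inv]

theorem stmt17 (a r : ℝ) (ha : 0 < a) (hr : r ∈ Set.Ioo (0 : ℝ) 1) :
    Filter.Tendsto (fun b : ℝ => hyp a b (a + b + 1) r / hyp a b (a + b) r)
      (nhdsWithin 0 (Set.Ioi 0)) (nhds 1) ∧
    Filter.Tendsto (fun b : ℝ => hyp a b (a + b + 1) r / hyp a b (a + b) r)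
      Filter.atTop (nhds 1) := by
  obtain ⟨hr0, hr1⟩ := hr
  constructor
  · apply tendsto_of_tendsto_of_tendsto_of_le_of_le' (g := fun b : ℝ => 1 - b/(1-r))
      (h := fun _ : ℝ => (1:ℝ))
    · have h : Tendsto (fun b : ℝ => 1 - b/(1-r)) (𝓝[>] 0) (𝓝 (1 - 0/(1-r))) := by
        apply Tendsto.mono_left _ nhdsWithin_le_nhds
        exact (tendsto_id.div_const _).const_sub 1
      simpa using h
    · exact tendsto_const_nhds
    · filter_upwards [Ioo_mem_nhdsGT_of_mem
        (show (0:ℝ) ∈ Ico (0:ℝ) 1 by constructor <;> norm_num)] with b hb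
      exact (key_bounds a r ha hr0 hr1 hb.1).2.2 hb.2.le
    · filter_upwards [self_mem_nhdsWithin] with b hb
      exact (key_bounds a r ha hr0 hr1 hb).1
  · apply tendsto_of_tendsto_of_tendsto_of_le_of_le'
      (g := fun b : ℝ => 1 - (∑' n : ℕ, (n:ℝ) * (poch a n / n.factorial * r ^ n))/b)
      (h := fun _ : ℝ => (1:ℝ))
    · have h0 : Tendsto (fun b : ℝ =>
          (∑' n : ℕ, (n:ℝ) * (poch a n / n.factorial * r ^ n)) / b) atTop (𝓝 0) :=
        Tendsto.div_atTop tendsto_const_nhds tendsto_id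
      simpa using h0.const_sub 1
    · exact tendsto_const_nhds
    · filter_upwards [eventually_gt_atTop 0] with b hb
      exact (key_bounds a r ha hr0 hr1 hb).2.1
    · filter_upwards [eventually_gt_atTop 0] with b hb
      exact (key_bounds a r ha hr0 hr1 hb).1
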